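/- Let P = conv({(6,0), (9,6), (1,5)}) ⊆ ℝ². Then the lattice width of P equals 6: the direction v = (0,1) satisfies ℓw_{(0,1)}(P) = 6, and for every nonzero v ∈ ℤ², ℓw_v(P) ≥ 6. -/

import Mathlib

/-! The functional `x ↦ ⟨x, v⟩` is linear, so on the triangle it ranges exactly over the interval
spanned by its values at the vertices. Hence the width in direction `v` is at least `|⟨e, v⟩|` for
each edge vector `e ∈ {(3,6), (-5,5), (8,1)}`, and one of these is at least `6` for every nonzero
`v ∈ ℤ²`. In direction `(0,1)` the triangle lies in the strip `0 ≤ y ≤ 6` and meets both of its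
boundary lines. -/

/-- The lattice width of `P ⊆ ℝ²` in the direction `v ∈ ℤ²`:
`ℓw_v(P) = sup { ⟨x,v⟩ : x ∈ P } − inf { ⟨x,v⟩ : x ∈ P }`. -/
noncomputable def latticeWidthIn {n : ℕ} (P : Set (Fin n → ℝ)) (v : Fin n → ℤ) : ℝ :=
  sSup {r : ℝ | ∃ x ∈ P, r = ∑ i, x i * (v i : ℝ)} -
    sInf {r : ℝ | ∃ x ∈ P, r = ∑ i, x i * (v i : ℝ)}

open Set

section LatticeWidth

variable {n : ℕ}

def latticeFunctional (v : Fin n → ℤ) : (Fin n → ℝ) →ₗ[ℝ] ℝ where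
  toFun x := ∑ i, x i * v i
  map_add' x y := by simp only [Pi.add_apply, add_mul, Finset.sum_add_distrib]
  map_smul' c x := by
    simp only [Pi.smul_apply, smul_eq_mul, mul_assoc, Finset.mul_sum, RingHom.id_apply]

@[simp]
lemma latticeFunctional_apply (v : Fin n → ℤ) (x : Fin n → ℝ) :
    latticeFunctional v x = ∑ i, x i * v i := rfl

lemma latticeWidthIn_eq_sSup_sub_sInf (P : Set (Fin n → ℝ)) (v : Fin n → ℤ) :
    latticeWidthIn P v = sSup (latticeFunctional v '' P) - sInf (latticeFunctional v '' P) := by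
  simp only [latticeWidthIn, Set.image, latticeFunctional_apply, eq_comm]

lemma abs_sub_le_latticeWidthIn {P : Set (Fin n → ℝ)} (hP : Bornology.IsBounded P)
    (v : Fin n → ℤ) {x y : Fin n → ℝ} (hx : x ∈ P) (hy : y ∈ P) :
    |latticeFunctional v x - latticeFunctional v y| ≤ latticeWidthIn P v := by
  have hbdd : Bornology.IsBounded (latticeFunctional v '' P) :=
    (latticeFunctional v).toContinuousLinearMap.lipschitz.isBounded_image hP
  have sub_le {x y : Fin n → ℝ} (hx : x ∈ P) (hy : y ∈ P) :
      latticeFunctional v x - latticeFunctional v y ≤ latticeWidthIn P v := by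
    rw [latticeWidthIn_eq_sSup_sub_sInf]
    exact sub_le_sub (le_csSup hbdd.bddAbove (mem_image_of_mem _ hx))
      (csInf_le hbdd.bddBelow (mem_image_of_mem _ hy))
  exact abs_sub_le_iff.2 ⟨sub_le hx hy, sub_le hy hx⟩

lemma abs_sub_le_latticeWidthIn_convexHull {S : Set (Fin n → ℝ)} (hS : S.Finite)
    (v : Fin n → ℤ) {x y : Fin n → ℝ} (hx : x ∈ S) (hy : y ∈ S) :
    |latticeFunctional v x - latticeFunctional v y| ≤ latticeWidthIn (convexHull ℝ S) v :=
  abs_sub_le_latticeWidthIn (hS.isCompact_convexHull ℝ).isBounded v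
    (subset_convexHull ℝ S hx) (subset_convexHull ℝ S hy)

lemma latticeWidthIn_convexHull_le {S : Set (Fin n → ℝ)} (hS : S.Nonempty) (v : Fin n → ℤ)
    {a b : ℝ} (h : ∀ s ∈ S, latticeFunctional v s ∈ Icc a b) :
    latticeWidthIn (convexHull ℝ S) v ≤ b - a := by
  have hsub : latticeFunctional v '' convexHull ℝ S ⊆ Icc a b := by
    rw [LinearMap.image_convexHull]
    exact convexHull_min (image_subset_iff.2 h) (convex_Icc a b)
  have hne : (latticeFunctional v '' convexHull ℝ S).Nonempty := hS.convexHull.image _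
  rw [latticeWidthIn_eq_sSup_sub_sInf]
  exact sub_le_sub (csSup_le hne fun r hr => (hsub hr).2) (le_csInf hne fun r hr => (hsub hr).1)

end LatticeWidth

-- `⟨e, v⟩` for the edge vectors `e = (3,6), (-5,5), (8,1)` of the triangle.
lemma six_le_max_abs_of_ne_zero {v : Fin 2 → ℤ} (hv : v ≠ 0) :
    6 ≤ max |3 * v 0 + 6 * v 1| (max |5 * v 1 - 5 * v 0| |8 * v 0 + v 1|) := by
  have hpq : v 0 ≠ 0 ∨ v 1 ≠ 0 := by
    contrapose! hv
    ext i
    fin_cases i <;> simp [hv]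
  simp only [le_max_iff, le_abs]
  omega

/-- The triangle `P = conv {(6,0), (9,6), (1,5)} ⊆ ℝ²` has lattice width `6`:
the direction `(0,1)` realizes `ℓw_{(0,1)}(P) = 6`, and every nonzero `v ∈ ℤ²` has
`ℓw_v(P) ≥ 6`. -/
theorem latticeWidth_example_triangle
    (P : Set (Fin 2 → ℝ))
    (hP : P = convexHull ℝ {![(6 : ℝ), 0], ![9, 6], ![1, 5]}) :
    latticeWidthIn P ![0, 1] = 6 ∧
      ∀ v : Fin 2 → ℤ, v ≠ 0 → 6 ≤ latticeWidthIn P v := by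
  set V : Set (Fin 2 → ℝ) := {![(6 : ℝ), 0], ![9, 6], ![1, 5]} with hV
  subst hP
  have edge (v : Fin 2 → ℤ) {x y : Fin 2 → ℝ} (hx : x ∈ V) (hy : y ∈ V) {d : ℝ}
      (hd : latticeFunctional v x - latticeFunctional v y = d) :
      |d| ≤ latticeWidthIn (convexHull ℝ V) v :=
    hd ▸ abs_sub_le_latticeWidthIn_convexHull (toFinite V) v hx hy
  have values (v : Fin 2 → ℤ) (a b : ℝ) :
      latticeFunctional v ![a, b] = a * v 0 + b * v 1 := by
    simp only [latticeFunctional_apply, Fin.sum_univ_two, Matrix.cons_val_zero,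
      Matrix.cons_val_one, Matrix.cons_val_fin_one]
  refine ⟨le_antisymm ?_ ?_, fun v hv => ?_⟩
  · simpa using latticeWidthIn_convexHull_le (insert_nonempty _ _) ![0, 1] (a := 0) (b := 6)
      (by norm_num [hV, values])
  · simpa using edge ![0, 1] (x := ![9, 6]) (y := ![6, 0]) (by simp [hV]) (by simp [hV])
      (d := 6) (by norm_num [values])
  · have h₁ := edge v (x := ![9, 6]) (y := ![6, 0]) (by simp [hV]) (by simp [hV])
      (d := 3 * v 0 + 6 * v 1) (by simp only [values]; ring)
    have h₂ := edge v (x := ![1, 5]) (y := ![6, 0]) (by simp [hV]) (by simp [hV])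
      (d := 5 * v 1 - 5 * v 0) (by simp only [values]; ring)
    have h₃ := edge v (x := ![9, 6]) (y := ![1, 5]) (by simp [hV]) (by simp [hV])
      (d := 8 * v 0 + v 1) (by simp only [values]; ring)
    have hsix : (6 : ℝ) ≤ max |3 * (v 0 : ℝ) + 6 * v 1|
        (max |5 * (v 1 : ℝ) - 5 * v 0| |8 * (v 0 : ℝ) + v 1|) := by
      exact_mod_cast six_le_max_abs_of_ne_zero hv
    exact hsix.trans (max_le h₁ (max_le h₂ h₃))
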